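/- arXiv:2303.06474 — 7 statements merged into one kernel-verified Lean document; each statement's English description precedes it below -/
import Mathlib

section
/- Every finite set A = {a₁,…,aₙ} of relatively prime positive integers can be written as aᵢ = fᵢ · ∏_{j≠i} dⱼ where (1) d₁,…,dₙ are pairwise coprime positive integers, (2) every subset of n−1 elements among f₁,…,fₙ has gcd 1, and (3) gcd(fᵢ, dᵢ) = 1 for all i. Moreover, this writing is unique, and is given by dᵢ = gcd(A ∖ {aᵢ}) and fᵢ = aᵢ / ∏_{j≠i} dⱼ. -/
lemma nat_prod_dvd_of_coprime {ι : Type*} [DecidableEq ι] (s : Finset ι) (g : ι → ℕ) (z : ℕ)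
    (hc : ∀ i ∈ s, ∀ j ∈ s, i ≠ j → Nat.Coprime (g i) (g j))
    (hd : ∀ i ∈ s, g i ∣ z) : (∏ i ∈ s, g i) ∣ z := by
  induction s using Finset.induction_on with
  | empty => simp
  | @insert a s ha ih =>
    rw [Finset.prod_insert ha]
    have h1 : Nat.Coprime (g a) (∏ i ∈ s, g i) :=
      Nat.Coprime.prod_right fun i hi =>
        hc a (Finset.mem_insert_self a s) i (Finset.mem_insert_of_mem hi)
          (fun h => ha (h ▸ hi))
    exact h1.mul_dvd_of_dvd_of_dvd (hd a (Finset.mem_insert_self a s))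
      (ih (fun i hi j hj hij =>
          hc i (Finset.mem_insert_of_mem hi) j (Finset.mem_insert_of_mem hj) hij)
        (fun i hi => hd i (Finset.mem_insert_of_mem hi)))

/-- Unique writing of a set of relatively prime positive integers
`aᵢ = fᵢ · ∏_{j≠i} dⱼ` with pairwise coprime `dᵢ`, any `n-1` of the `fᵢ` coprime,
and `gcd(fᵢ, dᵢ) = 1`; the unique such writing is `dᵢ = gcd(A ∖ {aᵢ})`,
`fᵢ = aᵢ / ∏_{j≠i} dⱼ`. -/
theorem stmt_0 (n : ℕ) (hn : 2 ≤ n) (a : Fin n → ℕ)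
    (hpos : ∀ i, 0 < a i) (hgcd : Finset.univ.gcd a = 1) :
    ∀ d f : Fin n → ℕ,
      ((∀ i, 0 < d i) ∧ (∀ i, 0 < f i) ∧
        (∀ i j, i ≠ j → Nat.Coprime (d i) (d j)) ∧
        (∀ i, (Finset.univ.erase i).gcd f = 1) ∧
        (∀ i, Nat.Coprime (f i) (d i)) ∧
        (∀ i, a i = f i * ∏ j ∈ Finset.univ.erase i, d j))
      ↔ ((d = fun i => (Finset.univ.erase i).gcd a) ∧
          f = fun i => a i / ∏ j ∈ Finset.univ.erase i,
            (Finset.univ.erase j).gcd a) := by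
  set D : Fin n → ℕ := fun i => (Finset.univ.erase i).gcd a with hD
  set P : Fin n → ℕ := fun i => ∏ j ∈ Finset.univ.erase i, D j with hP
  -- basic membership facts
  have hmem : ∀ i j : Fin n, i ≠ j → i ∈ Finset.univ.erase j := fun i j hij =>
    Finset.mem_erase.2 ⟨hij, Finset.mem_univ i⟩
  have hne : ∀ i : Fin n, (Finset.univ.erase i).Nonempty := by
    intro i
    rw [← Finset.card_pos, Finset.card_erase_of_mem (Finset.mem_univ i)]
    simp only [Finset.card_univ, Fintype.card_fin]
    omega
  have hDdvd : ∀ i j : Fin n, j ≠ i → D i ∣ a j := fun i j hji =>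
    Finset.gcd_dvd (hmem j i hji)
  have hDpos : ∀ i, 0 < D i := by
    intro i
    rcases Nat.eq_zero_or_pos (D i) with h | h
    · exfalso
      obtain ⟨j, hj⟩ := hne i
      have := (Finset.gcd_eq_zero_iff.1 h) j hj
      exact (hpos j).ne' this
    · exact h
  have hDcop : ∀ i j : Fin n, i ≠ j → Nat.Coprime (D i) (D j) := by
    intro i j hij
    have : Nat.gcd (D i) (D j) ∣ Finset.univ.gcd a := by
      apply Finset.dvd_gcd
      intro k _
      rcases eq_or_ne k i with rfl | hki
      · exact dvd_trans (Nat.gcd_dvd_right _ _) (hDdvd j k hij)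
      · exact dvd_trans (Nat.gcd_dvd_left _ _) (hDdvd i k hki)
    rw [hgcd] at this
    exact Nat.dvd_one.1 this
  have hPdvd : ∀ i, P i ∣ a i := by
    intro i
    apply nat_prod_dvd_of_coprime
    · intro x hx y hy hxy
      exact hDcop x y hxy
    · intro j hj
      exact hDdvd j i (Finset.mem_erase.1 hj).1.symm
  have hPpos : ∀ i, 0 < P i :=
    fun i => Finset.prod_pos fun j _ => hDpos j
  intro d f
  constructor
  · rintro ⟨hd, hf, hdc, hfg, hfd, ha⟩
    -- products of the d's
    have hprodd : ∀ i : Fin n, (∏ j ∈ Finset.univ.erase i, d j) ∣ a i :=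
      fun i => Dvd.intro_left _ (ha i).symm
    have hddvda : ∀ i j : Fin n, j ≠ i → d i ∣ a j := by
      intro i j hji
      have h1 : d i ∣ ∏ k ∈ Finset.univ.erase j, d k :=
        Finset.dvd_prod_of_mem d (hmem i j (fun h => hji h.symm))
      exact dvd_trans h1 (Dvd.intro_left _ (ha j).symm)
    -- d i ∣ D i
    have hdD : ∀ i, d i ∣ D i := by
      intro i
      apply Finset.dvd_gcd
      intro j hj
      exact hddvda i j (Finset.mem_erase.1 hj).1
    -- D i ∣ d i via factorizations
    have hDd : ∀ i, D i ∣ d i := by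
      intro i
      rw [← Nat.factorization_le_iff_dvd (hDpos i).ne' (hd i).ne']
      intro p
      rcases em p.Prime with hp | hp
      · set e := (D i).factorization p with he
        rcases Nat.eq_zero_or_pos e with h0 | hpose
        · simp [← he, h0]
        · have hpDi : p ∣ D i := by
            have : p ^ 1 ∣ D i :=
              (Nat.Prime.pow_dvd_iff_le_factorization hp (hDpos i).ne').2 hpose
            simpa using this
          have hpow : p ^ e ∣ D i :=
            (Nat.Prime.pow_dvd_iff_le_factorization hp (hDpos i).ne').2 le_rfl
          -- p does not divide a i
          have hpnai : ¬ p ∣ a i := by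
            intro hpa
            have : p ∣ Finset.univ.gcd a := by
              apply Finset.dvd_gcd
              intro k _
              rcases eq_or_ne k i with rfl | hki
              · exact hpa
              · exact dvd_trans hpDi (hDdvd i k hki)
            rw [hgcd] at this
            exact Nat.Prime.one_lt hp |>.ne' (Nat.dvd_one.1 this)
          -- p does not divide d k for k ≠ i
          have hpnd : ∀ k : Fin n, k ≠ i → ¬ p ∣ d k := by
            intro k hki hpd
            exact hpnai (dvd_trans hpd (hddvda k i (Ne.symm hki)))
          -- there is j₀ ≠ i with p ∤ f j₀
          have hex : ∃ j₀ : Fin n, j₀ ≠ i ∧ ¬ p ∣ f j₀ := by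
            by_contra hcon
            push_neg at hcon
            have : p ∣ (Finset.univ.erase i).gcd f := by
              apply Finset.dvd_gcd
              intro j hj
              exact hcon j (Finset.mem_erase.1 hj).1
            rw [hfg i] at this
            exact Nat.Prime.one_lt hp |>.ne' (Nat.dvd_one.1 this)
          obtain ⟨j₀, hj₀i, hpf⟩ := hex
          have hpeaj : p ^ e ∣ a j₀ := dvd_trans hpow (hDdvd i j₀ hj₀i)
          have hcop1 : Nat.Coprime (p ^ e) (f j₀) :=
            Nat.Coprime.pow_left _ ((Nat.Prime.coprime_iff_not_dvd hp).2 hpf)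
          rw [ha j₀] at hpeaj
          have hpeprod : p ^ e ∣ ∏ k ∈ Finset.univ.erase j₀, d k :=
            (hcop1.symm).symm.dvd_of_dvd_mul_left hpeaj
          -- split the product at i
          have hisplit : ∏ k ∈ Finset.univ.erase j₀, d k
              = d i * ∏ k ∈ (Finset.univ.erase j₀).erase i, d k :=
            (Finset.mul_prod_erase _ d (hmem i j₀ (fun h => hj₀i h.symm))).symm
          rw [hisplit] at hpeprod
          have hcop2 : Nat.Coprime (p ^ e) (∏ k ∈ (Finset.univ.erase j₀).erase i, d k) := by
            apply Nat.Coprime.pow_left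
            apply Nat.Coprime.prod_right
            intro k hk
            exact (Nat.Prime.coprime_iff_not_dvd hp).2 (hpnd k (Finset.mem_erase.1 hk).1)
          have hped : p ^ e ∣ d i := hcop2.dvd_of_dvd_mul_right hpeprod
          exact (Nat.Prime.pow_dvd_iff_le_factorization hp (hd i).ne').1 hped
      · simp [Nat.factorization_eq_zero_of_not_prime _ hp]
    have hdeq : d = D := funext fun i => Nat.dvd_antisymm (hdD i) (hDd i)
    refine ⟨hdeq, funext fun i => ?_⟩
    have hai : a i = f i * P i := by
      rw [ha i, hdeq]
    exact (Nat.div_eq_of_eq_mul_left (hPpos i) (by rw [hai, mul_comm])).symm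
  · rintro ⟨rfl, rfl⟩
    refine ⟨hDpos, ?_, hDcop, ?_, ?_, ?_⟩
    · intro i
      exact Nat.div_pos (Nat.le_of_dvd (hpos i) (hPdvd i)) (hPpos i)
    · -- gcd of the f's over erase i is 1
      intro i
      by_contra hcon
      have hgne : (Finset.univ.erase i).gcd (fun j => a j / P j) ≠ 0 := by
        rw [Ne, Finset.gcd_eq_zero_iff]
        push_neg
        obtain ⟨j, hj⟩ := hne i
        exact ⟨j, hj, (Nat.div_pos (Nat.le_of_dvd (hpos j) (hPdvd j)) (hPpos j)).ne'⟩
      obtain ⟨p, hp, hpg⟩ := Nat.exists_prime_and_dvd hcon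
      have hpf : ∀ j : Fin n, j ≠ i → p ∣ a j / P j := by
        intro j hji
        exact dvd_trans hpg (Finset.gcd_dvd (hmem j i hji))
      have hkey : p * D i ∣ D i := by
        apply Finset.dvd_gcd
        intro j hj
        have hji := (Finset.mem_erase.1 hj).1
        have haj : a j = (a j / P j) * P j := (Nat.div_mul_cancel (hPdvd j)).symm
        have hDiPj : D i ∣ P j := Finset.dvd_prod_of_mem D (hmem i j (fun h => hji h.symm))
        calc p * D i ∣ (a j / P j) * P j := mul_dvd_mul (hpf j hji) hDiPj
          _ = a j := haj.symm
      have h1 : p * D i ≤ D i := Nat.le_of_dvd (hDpos i) hkey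
      have h2 : 2 * D i ≤ p * D i := Nat.mul_le_mul_right _ (hp.two_le)
      have := hDpos i
      omega
    · -- coprime (f i) (D i)
      intro i
      by_contra hcon
      obtain ⟨p, hp, hpf, hpD⟩ := Nat.Prime.not_coprime_iff_dvd.1 hcon
      have hpai : p ∣ a i := by
        have : (a i / P i) ∣ a i := Dvd.intro _ (Nat.div_mul_cancel (hPdvd i))
        exact dvd_trans hpf this
      have : p ∣ Finset.univ.gcd a := by
        apply Finset.dvd_gcd
        intro k _
        rcases eq_or_ne k i with rfl | hki
        · exact hpai
        · exact dvd_trans hpD (hDdvd i k hki)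
      rw [hgcd] at this
      exact hp.one_lt.ne' (Nat.dvd_one.1 this)
    · intro i
      exact (Nat.div_mul_cancel (hPdvd i)).symm
end

section
/- Let a₁,…,aₙ be relatively prime positive integers with n ≥ 2 and suppose that for every i, lcm(aᵢ, gcd({aⱼ : j ≠ i})) belongs to the numerical semigroup generated by {aⱼ : j ≠ i}. Then for every i, the minimal positive integer c with c·aᵢ ∈ ⟨aⱼ : j ≠ i⟩ equals gcd({aⱼ : j ≠ i}). -/
/-- If for every `i`, `lcm(aᵢ, gcd({aⱼ : j ≠ i}))` lies in the numerical semigroup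
generated by the other generators, then the minimal positive `c` with
`c·aᵢ ∈ ⟨aⱼ : j ≠ i⟩` equals `gcd({aⱼ : j ≠ i})`. -/
theorem stmt_2 (n : ℕ) (hn : 2 ≤ n) (a : Fin n → ℕ)
    (hpos : ∀ i, 0 < a i) (hgcd : Finset.univ.gcd a = 1)
    (hfree : ∀ i : Fin n, ∃ u : Fin n → ℕ, u i = 0 ∧
      Nat.lcm (a i) ((Finset.univ.erase i).gcd a) = ∑ j, u j * a j) :
    ∀ i : Fin n,
      sInf {c : ℕ | 0 < c ∧ ∃ u : Fin n → ℕ, u i = 0 ∧ c * a i = ∑ j, u j * a j}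
        = (Finset.univ.erase i).gcd a := by
  intro i
  set d := (Finset.univ.erase i).gcd a with hd
  -- gcd univ = gcd (a i) d
  have hsplit : Finset.univ.gcd a = Nat.gcd (a i) d := by
    conv_lhs => rw [← Finset.insert_erase (Finset.mem_univ i)]
    rw [Finset.gcd_insert]; rfl
  have hcop : Nat.Coprime (a i) d := by
    unfold Nat.Coprime; rw [← hsplit]; exact hgcd
  -- d > 0
  obtain ⟨j, hji⟩ : ∃ j : Fin n, j ≠ i := by
    have : 1 < n := hn
    exact ⟨if i = ⟨0, by omega⟩ then ⟨1, by omega⟩ else ⟨0, by omega⟩, by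
      split <;> simp_all <;> omega⟩
  have hdpos : 0 < d := by
    rcases Nat.eq_zero_or_pos d with h0 | h
    · exfalso
      have hj : a j = 0 := by
        have := (Finset.gcd_eq_zero_iff.mp h0) j
          (Finset.mem_erase.mpr ⟨hji, Finset.mem_univ j⟩)
        exact this
      exact absurd hj (hpos j).ne'
    · exact h
  -- d is in the set
  obtain ⟨u, hui, hu⟩ := hfree i
  have hdmem : d ∈ {c : ℕ | 0 < c ∧ ∃ u : Fin n → ℕ, u i = 0 ∧ c * a i = ∑ j, u j * a j} := by
    refine ⟨hdpos, u, hui, ?_⟩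
    rw [← hu, Nat.Coprime.lcm_eq_mul hcop, Nat.mul_comm]
  -- every element of the set is ≥ d
  have hlb : ∀ c ∈ {c : ℕ | 0 < c ∧ ∃ u : Fin n → ℕ, u i = 0 ∧ c * a i = ∑ j, u j * a j},
      d ≤ c := by
    rintro c ⟨hcpos, v, hvi, hv⟩
    have hdvd : d ∣ c * a i := by
      rw [hv]
      refine Finset.dvd_sum fun j _ => ?_
      rcases eq_or_ne j i with rfl | hne
      · simp [hvi]
      · exact Dvd.dvd.mul_left
          (Finset.gcd_dvd (Finset.mem_erase.mpr ⟨hne, Finset.mem_univ j⟩)) _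
    have : d ∣ c := (Nat.Coprime.dvd_of_dvd_mul_right hcop.symm) hdvd
    exact Nat.le_of_dvd hcpos this
  exact le_antisymm (Nat.sInf_le hdmem) (le_csInf ⟨d, hdmem⟩ hlb)
end

section
/- Let d₁,…,dₙ be pairwise coprime positive integers and f₁ = 1, f₂,…,fₙ positive integers with gcd(dⱼ, fⱼ) = 1 for all j, and set aⱼ = fⱼ · ∏_{i≠j} dᵢ. Then for every j ∈ {2,…,n}: lcm(aⱼ, gcd(a₁, a_{j+1},…,aₙ)) = dⱼ·aⱼ = fⱼ·d₁·a₁ = lcm(aⱼ, a₁); in particular dⱼ·aⱼ lies in the numerical semigroup generated by {a₁, a_{j+1},…,aₙ}, so that ⟨a₁,…,aₙ⟩ is free for the arrangement (a₂,…,aₙ,a₁). -/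
/-- For pairwise coprime `d₁,…,dₙ`, `f₁ = 1`, `gcd(dⱼ,fⱼ) = 1` and
`aⱼ = fⱼ·∏_{i≠j} dᵢ`, for all `j ≠ 1`:
`lcm(aⱼ, gcd(a₁, a_{j+1},…,aₙ)) = dⱼ·aⱼ = fⱼ·d₁·a₁ = lcm(aⱼ, a₁)`, and `dⱼ·aⱼ`
lies in the numerical semigroup generated by `{a₁, a_{j+1},…,aₙ}`; hence
`⟨a₁,…,aₙ⟩` is free for the arrangement `(a₂,…,aₙ,a₁)`. -/
theorem stmt_5 (n : ℕ) (hn : 2 ≤ n) (d f a : Fin n → ℕ)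
    (i₀ : Fin n) (hi₀ : (i₀ : ℕ) = 0)
    (hd : ∀ i, 0 < d i) (hf : ∀ i, 0 < f i)
    (hcop : ∀ i j, i ≠ j → Nat.Coprime (d i) (d j))
    (hf0 : f i₀ = 1)
    (hdf : ∀ j, Nat.Coprime (d j) (f j))
    (ha : ∀ j, a j = f j * ∏ i ∈ Finset.univ.erase j, d i)
    (j : Fin n) (hj : j ≠ i₀) :
    Nat.lcm (a j)
        ((insert i₀ (Finset.univ.filter (fun k => j < k))).gcd a) = d j * a j ∧
    d j * a j = f j * d i₀ * a i₀ ∧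
    d j * a j = Nat.lcm (a j) (a i₀) ∧
    ∃ u : Fin n → ℕ,
      (∀ k, k ∉ insert i₀ (Finset.univ.filter (fun k => j < k)) → u k = 0) ∧
      d j * a j = ∑ k, u k * a k := by
  have hprod : ∀ k : Fin n, d k * a k = f k * ∏ i, d i := by
    intro k
    rw [ha k, ← mul_assoc, mul_comm (d k) (f k), mul_assoc,
      Finset.mul_prod_erase Finset.univ d (Finset.mem_univ k)]
  have key : d j * a j = f j * d i₀ * a i₀ := by
    rw [hprod j, ha i₀, hf0, one_mul, mul_assoc,
      Finset.mul_prod_erase Finset.univ d (Finset.mem_univ i₀)]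
  have hdj_aj : Nat.Coprime (d j) (a j) := by
    rw [ha j]
    exact (hdf j).mul_right (Nat.Coprime.prod_right fun i hi =>
      hcop j i (Finset.ne_of_mem_erase hi).symm)
  have hdvd : ∀ k : Fin n, k ≠ j → d j ∣ a k := by
    intro k hk
    rw [ha k]
    exact Dvd.dvd.mul_left
      (Finset.dvd_prod_of_mem d (Finset.mem_erase.mpr ⟨hk.symm, Finset.mem_univ j⟩)) (f k)
  set S := insert i₀ (Finset.univ.filter (fun k => j < k)) with hS
  have hGdvd : S.gcd a ∣ a i₀ := Finset.gcd_dvd (Finset.mem_insert_self _ _)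
  have hdjG : d j ∣ S.gcd a := by
    refine Finset.dvd_gcd fun k hk => hdvd k ?_
    rcases Finset.mem_insert.mp hk with h | h
    · exact h ▸ hj.symm
    · exact (Finset.mem_filter.mp h).2.ne'
  have ai0_dvd : a i₀ ∣ d j * a j := Dvd.intro_left (f j * d i₀) key.symm
  have h3 : d j * a j = Nat.lcm (a j) (a i₀) :=
    (Nat.dvd_antisymm (Nat.lcm_dvd (dvd_mul_left _ _) ai0_dvd)
      (Nat.Coprime.mul_dvd_of_dvd_of_dvd hdj_aj
        ((hdvd i₀ hj.symm).trans (Nat.dvd_lcm_right _ _))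
        (Nat.dvd_lcm_left _ _))).symm
  have h1 : Nat.lcm (a j) (S.gcd a) = d j * a j :=
    Nat.dvd_antisymm (Nat.lcm_dvd (dvd_mul_left _ _) (hGdvd.trans ai0_dvd))
      (Nat.Coprime.mul_dvd_of_dvd_of_dvd hdj_aj
        (hdjG.trans (Nat.dvd_lcm_right _ _)) (Nat.dvd_lcm_left _ _))
  refine ⟨h1, key, h3, fun k => if k = i₀ then f j * d i₀ else 0, ?_, ?_⟩
  · intro k hk
    have : k ≠ i₀ := fun h => hk (h ▸ Finset.mem_insert_self _ _)
    simp [this]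
  · rw [key, Finset.sum_eq_single i₀ (fun b _ hb => by simp [hb])
      (fun h => absurd (Finset.mem_univ i₀) h)]
    simp
end

section
/- Let d₁, d₂, d₃ be pairwise coprime positive integers and f₃ a positive integer with gcd(f₃, d₃) = 1. Set a₁ = d₂d₃, a₂ = d₁d₃, a₃ = f₃d₁d₂. Then the numerical semigroup S = ⟨a₁, a₂, a₃⟩ is free for every one of the six arrangements of (a₁, a₂, a₃). -/
/-- Membership in the numerical semigroup generated by two positive integers. -/
def NumSgrpMem2 (x b c : ℕ) : Prop := ∃ u v : ℕ, x = u * b + v * c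

/-- Freeness of a 3-generated numerical semigroup for the arrangement `(b₁,b₂,b₃)`. -/
def FreeArr3 (b₁ b₂ b₃ : ℕ) : Prop :=
  NumSgrpMem2 (Nat.lcm b₁ (Nat.gcd b₂ b₃)) b₂ b₃ ∧ ∃ u : ℕ, Nat.lcm b₂ b₃ = u * b₃

/-- For pairwise coprime `d₁,d₂,d₃`, `f₃` coprime to `d₃`, the numerical semigroup
generated by `a₁ = d₂d₃`, `a₂ = d₁d₃`, `a₃ = f₃d₁d₂` (assumed to be a minimal
generating set) is free for every one of the six arrangements. -/
theorem stmt_6 (d₁ d₂ d₃ f₃ : ℕ) (h1 : 0 < d₁) (h2 : 0 < d₂) (h3 : 0 < d₃)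
    (hf : 0 < f₃)
    (h12 : Nat.Coprime d₁ d₂) (h13 : Nat.Coprime d₁ d₃) (h23 : Nat.Coprime d₂ d₃)
    (hf3 : Nat.Coprime f₃ d₃)
    (hmin : ¬ NumSgrpMem2 (d₂ * d₃) (d₁ * d₃) (f₃ * d₁ * d₂) ∧
            ¬ NumSgrpMem2 (d₁ * d₃) (d₂ * d₃) (f₃ * d₁ * d₂) ∧
            ¬ NumSgrpMem2 (f₃ * d₁ * d₂) (d₂ * d₃) (d₁ * d₃)) :
    FreeArr3 (d₂ * d₃) (d₁ * d₃) (f₃ * d₁ * d₂) ∧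
    FreeArr3 (d₂ * d₃) (f₃ * d₁ * d₂) (d₁ * d₃) ∧
    FreeArr3 (d₁ * d₃) (d₂ * d₃) (f₃ * d₁ * d₂) ∧
    FreeArr3 (d₁ * d₃) (f₃ * d₁ * d₂) (d₂ * d₃) ∧
    FreeArr3 (f₃ * d₁ * d₂) (d₂ * d₃) (d₁ * d₃) ∧
    FreeArr3 (f₃ * d₁ * d₂) (d₁ * d₃) (d₂ * d₃) := by

  have lmul : ∀ b c : ℕ, ∃ u : ℕ, Nat.lcm b c = u * c := fun b c =>
    ⟨Nat.lcm b c / c, (Nat.div_mul_cancel (Nat.dvd_lcm_right b c)).symm⟩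
  -- gcd computations
  have g1 : Nat.gcd (d₁ * d₃) (f₃ * d₁ * d₂) = d₁ := by
    have : f₃ * d₁ * d₂ = d₁ * (f₃ * d₂) := by ring
    rw [this, Nat.gcd_mul_left, (hf3.symm.mul_right h23.symm : Nat.Coprime d₃ (f₃ * d₂)),
      mul_one]
  have g2 : Nat.gcd (d₂ * d₃) (f₃ * d₁ * d₂) = d₂ := by
    have e1 : d₂ * d₃ = d₂ * d₃ := rfl
    have : f₃ * d₁ * d₂ = d₂ * (f₃ * d₁) := by ring
    rw [this, Nat.gcd_mul_left, (hf3.symm.mul_right h13.symm : Nat.Coprime d₃ (f₃ * d₁)),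
      mul_one]
  have g3 : Nat.gcd (d₂ * d₃) (d₁ * d₃) = d₃ := by
    rw [mul_comm d₂ d₃, mul_comm d₁ d₃, Nat.gcd_mul_left,
      (h12.symm : Nat.Coprime d₂ d₁), mul_one]
  -- lcm computations
  have l1 : Nat.lcm (d₂ * d₃) d₁ = d₂ * d₃ * d₁ :=
    Nat.Coprime.lcm_eq_mul (Nat.Coprime.mul h12.symm h13.symm)
  have l2 : Nat.lcm (d₁ * d₃) d₂ = d₁ * d₃ * d₂ :=
    Nat.Coprime.lcm_eq_mul (Nat.Coprime.mul h12 h23.symm)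
  have l3 : Nat.lcm (f₃ * d₁ * d₂) d₃ = f₃ * d₁ * d₂ * d₃ :=
    Nat.Coprime.lcm_eq_mul (Nat.Coprime.mul (Nat.Coprime.mul hf3 h13) h23)
  refine ⟨⟨?_, lmul _ _⟩, ⟨?_, lmul _ _⟩, ⟨?_, lmul _ _⟩, ⟨?_, lmul _ _⟩,
    ⟨?_, lmul _ _⟩, ⟨?_, lmul _ _⟩⟩
  · rw [g1, l1]; exact ⟨d₂, 0, by ring⟩
  · rw [Nat.gcd_comm, g1, l1]; exact ⟨0, d₂, by ring⟩
  · rw [g2, l2]; exact ⟨d₁, 0, by ring⟩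
  · rw [Nat.gcd_comm, g2, l2]; exact ⟨0, d₁, by ring⟩
  · rw [g3, l3]; exact ⟨f₃ * d₁, 0, by ring⟩
  · rw [Nat.gcd_comm, g3, l3]; exact ⟨f₃ * d₂, 0, by ring⟩
end

section
/- Let a₁, a₂, a₃ be relatively prime positive integers minimally generating a numerical semigroup, and define cᵢ as the minimal positive integer c with c·aᵢ ∈ ⟨aⱼ, aₖ⟩ ({i,j,k} = {1,2,3}). If c₁a₁ = c₂a₂ ≠ c₃a₃ and there exist, for each l ∈ {1,2}, expressions c₃a₃ = α·a_l (a pure power representation, i.e. c₃a₃ is a multiple of both a₁ and a₂ obtained from Markov bases), then c₁ divides a₃/gcd(a₃,a₁), c₂ divides a₃/gcd(a₃,a₂), and c₁a₁ divides c₃a₃; in particular the Betti degrees c₁a₁ and c₃a₃ are ordered by divisibility. -/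
/-- For a 3-generated numerical semigroup with `c₁a₁ = c₂a₂ ≠ c₃a₃` and with
`c₃a₃ = δ₃₁·a₁ = δ₃₂·a₂` (where `δ₃ₗ = a₃/gcd(a₃,aₗ)`), one gets `c₁ ∣ δ₃₁`,
`c₂ ∣ δ₃₂` and `c₁a₁ ∣ c₃a₃`: the Betti degrees are ordered by divisibility. -/
theorem stmt_7 (a₁ a₂ a₃ : ℕ) (h1 : 0 < a₁) (h2 : 0 < a₂) (h3 : 0 < a₃)
    (hgcd : Nat.gcd a₁ (Nat.gcd a₂ a₃) = 1)
    (hmin₁ : ¬ ∃ u v : ℕ, a₁ = u * a₂ + v * a₃)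
    (hmin₂ : ¬ ∃ u v : ℕ, a₂ = u * a₁ + v * a₃)
    (hmin₃ : ¬ ∃ u v : ℕ, a₃ = u * a₁ + v * a₂)
    (c₁ c₂ c₃ : ℕ)
    (hc₁ : c₁ = sInf {c : ℕ | 0 < c ∧ ∃ u v : ℕ, c * a₁ = u * a₂ + v * a₃})
    (hc₂ : c₂ = sInf {c : ℕ | 0 < c ∧ ∃ u v : ℕ, c * a₂ = u * a₁ + v * a₃})
    (hc₃ : c₃ = sInf {c : ℕ | 0 < c ∧ ∃ u v : ℕ, c * a₃ = u * a₁ + v * a₂})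
    (h12 : c₁ * a₁ = c₂ * a₂) (hne : c₁ * a₁ ≠ c₃ * a₃)
    (hM1 : c₃ * a₃ = (a₃ / Nat.gcd a₃ a₁) * a₁)
    (hM2 : c₃ * a₃ = (a₃ / Nat.gcd a₃ a₂) * a₂) :
    c₁ ∣ a₃ / Nat.gcd a₃ a₁ ∧ c₂ ∣ a₃ / Nat.gcd a₃ a₂ ∧ (c₁ * a₁) ∣ (c₃ * a₃) := by
  set g := Nat.gcd a₁ a₂ with hg
  have hgpos : 0 < g := Nat.gcd_pos_of_pos_left _ h1
  obtain ⟨l, hl⟩ : g ∣ a₁ := Nat.gcd_dvd_left a₁ a₂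
  obtain ⟨k, hk⟩ : g ∣ a₂ := Nat.gcd_dvd_right a₁ a₂
  have hcop : Nat.Coprime (a₁ / g) (a₂ / g) := Nat.coprime_div_gcd_div_gcd hgpos
  have hdl : a₁ / g = l := by rw [hl, Nat.mul_div_cancel_left _ hgpos]
  have hdk : a₂ / g = k := by rw [hk, Nat.mul_div_cancel_left _ hgpos]
  rw [hdl, hdk] at hcop
  have hkpos : 0 < k := by
    rcases Nat.eq_zero_or_pos k with h | h
    · subst h; simp at hk; omega
    · exact h
  have hlpos : 0 < l := by
    rcases Nat.eq_zero_or_pos l with h | h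
    · subst h; simp at hl; omega
    · exact h
  -- k is in the defining set for c₁
  have hmem : k ∈ {c : ℕ | 0 < c ∧ ∃ u v : ℕ, c * a₁ = u * a₂ + v * a₃} := by
    refine ⟨hkpos, l, 0, ?_⟩
    rw [hl, hk]; ring
  have hle : c₁ ≤ k := hc₁ ▸ Nat.sInf_le hmem
  -- c₁ is positive and k ∣ c₁
  obtain ⟨hc₁pos, -⟩ : 0 < c₁ ∧ ∃ u v : ℕ, c₁ * a₁ = u * a₂ + v * a₃ :=
    hc₁ ▸ Nat.sInf_mem ⟨k, hmem⟩
  have hkdvd : k ∣ c₁ := by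
    have ha2dvd : a₂ ∣ c₁ * a₁ := ⟨c₂, by rw [h12]; ring⟩
    have : k ∣ c₁ * l := by
      obtain ⟨t, ht⟩ := ha2dvd
      refine ⟨t, ?_⟩
      have : g * (c₁ * l) = g * (k * t) := by
        calc g * (c₁ * l) = c₁ * (g * l) := by ring
          _ = c₁ * a₁ := by rw [← hl]
          _ = a₂ * t := ht
          _ = g * (k * t) := by rw [hk]; ring
      exact Nat.eq_of_mul_eq_mul_left hgpos this
    exact (Nat.Coprime.dvd_of_dvd_mul_right hcop.symm this)
  have hc₁k : c₁ = k := Nat.le_antisymm hle (Nat.le_of_dvd hc₁pos hkdvd)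
  -- k ∣ δ₃₁
  have hkdel : k ∣ a₃ / Nat.gcd a₃ a₁ := by
    have ha2dvd : a₂ ∣ (a₃ / Nat.gcd a₃ a₁) * a₁ := ⟨a₃ / Nat.gcd a₃ a₂, by
      rw [← hM1, hM2]; ring⟩
    have : k ∣ (a₃ / Nat.gcd a₃ a₁) * l := by
      obtain ⟨t, ht⟩ := ha2dvd
      refine ⟨t, ?_⟩
      have : g * ((a₃ / Nat.gcd a₃ a₁) * l) = g * (k * t) := by
        calc g * ((a₃ / Nat.gcd a₃ a₁) * l) = (a₃ / Nat.gcd a₃ a₁) * (g * l) := by ring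
          _ = (a₃ / Nat.gcd a₃ a₁) * a₁ := by rw [← hl]
          _ = a₂ * t := ht
          _ = g * (k * t) := by rw [hk]; ring
      exact Nat.eq_of_mul_eq_mul_left hgpos this
    exact Nat.Coprime.dvd_of_dvd_mul_right hcop.symm this
  have h1' : c₁ ∣ a₃ / Nat.gcd a₃ a₁ := hc₁k ▸ hkdel
  have h3' : c₁ * a₁ ∣ c₃ * a₃ := by
    rw [hM1]; exact mul_dvd_mul_right h1' a₁
  refine ⟨h1', ?_, h3'⟩
  -- c₂ ∣ δ₃₂ : c₂ * a₂ = c₁ * a₁ ∣ c₃ * a₃ = δ₃₂ * a₂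
  have : c₂ * a₂ ∣ (a₃ / Nat.gcd a₃ a₂) * a₂ := by
    rw [← h12, ← hM2]; exact h3'
  obtain ⟨t, ht⟩ := this
  refine ⟨t, ?_⟩
  have : (a₃ / Nat.gcd a₃ a₂) * a₂ = (c₂ * t) * a₂ := by rw [ht]; ring
  exact Nat.eq_of_mul_eq_mul_right h2 this
end

section
/- Let a₁,…,aₙ be as in the Betti divisible setup (aᵢ = fᵢ·∏_{j≠i}dⱼ with d₁,…,dₙ pairwise coprime, f₁ = f₂ = 1, fᵢ ∣ f_{i+1}, gcd(fᵢ,dᵢ)=1). Suppose (α₁,…,αₙ), (β₁,…,βₙ) ∈ ℕⁿ satisfy Σ αᵢaᵢ = Σ βᵢaᵢ and for each i either αᵢ = 0 or βᵢ = 0. Then for every s, dₛ divides αₛ and dₛ divides βₛ. -/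
/-- In the Betti divisible setup, if `Σ αᵢaᵢ = Σ βᵢaᵢ` with disjoint supports
(for each `i`, `αᵢ = 0` or `βᵢ = 0`), then `dₛ ∣ αₛ` and `dₛ ∣ βₛ` for all `s`. -/
theorem stmt_11 (n : ℕ) (hn : 2 ≤ n) (d f a : Fin n → ℕ)
    (i₀ i₁ : Fin n) (hi₀ : (i₀ : ℕ) = 0) (hi₁ : (i₁ : ℕ) = 1)
    (hd : ∀ i, 0 < d i) (hfpos : ∀ i, 0 < f i)
    (hcop : ∀ i j, i ≠ j → Nat.Coprime (d i) (d j))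
    (hf0 : f i₀ = 1) (hf1 : f i₁ = 1)
    (hdvd : ∀ i j : Fin n, (j : ℕ) = (i : ℕ) + 1 → f i ∣ f j)
    (hdf : ∀ i, Nat.Coprime (f i) (d i))
    (ha : ∀ i, a i = f i * ∏ j ∈ Finset.univ.erase i, d j)
    (α β : Fin n → ℕ)
    (hsum : ∑ i, α i * a i = ∑ i, β i * a i)
    (hsupp : ∀ i, α i = 0 ∨ β i = 0) :
    ∀ s, d s ∣ α s ∧ d s ∣ β s := by
  intro s
  -- d s is coprime to a s
  have hcopa : Nat.Coprime (d s) (a s) := by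
    rw [ha s]
    refine Nat.Coprime.mul_right ((hdf s).symm) ?_
    refine Nat.Coprime.prod_right ?_
    intro j hj
    exact hcop s j (fun h => (Finset.mem_erase.mp hj).1 h.symm)
  -- d s divides a i for i ≠ s
  have hdvda : ∀ i, i ≠ s → d s ∣ a i := by
    intro i hi
    rw [ha i]
    exact Dvd.dvd.mul_left
      (Finset.dvd_prod_of_mem d (Finset.mem_erase.mpr ⟨fun h => hi h.symm, Finset.mem_univ s⟩)) _
  have hX : d s ∣ ∑ i ∈ Finset.univ.erase s, α i * a i :=
    Finset.dvd_sum fun i hi => (hdvda i (Finset.mem_erase.mp hi).1).mul_left _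
  have hY : d s ∣ ∑ i ∈ Finset.univ.erase s, β i * a i :=
    Finset.dvd_sum fun i hi => (hdvda i (Finset.mem_erase.mp hi).1).mul_left _
  rw [← Finset.add_sum_erase _ _ (Finset.mem_univ s),
      ← Finset.add_sum_erase _ _ (Finset.mem_univ s)] at hsum
  rcases hsupp s with h0 | h0
  · refine ⟨h0 ▸ dvd_zero _, ?_⟩
    rw [h0, zero_mul, zero_add] at hsum
    rw [hsum, add_comm] at hX
    exact hcopa.dvd_of_dvd_mul_right ((Nat.dvd_add_right hY).mp hX)
  · refine ⟨?_, h0 ▸ dvd_zero _⟩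
    rw [h0, zero_mul, zero_add] at hsum
    rw [← hsum, add_comm] at hY
    exact hcopa.dvd_of_dvd_mul_right ((Nat.dvd_add_right hX).mp hY)
end

section
/- Let a₁,…,aₙ be as in the Betti divisible setup, and suppose α ∈ ℕⁿ satisfies dₛ ∣ αₛ for all s, α₁,…,α_{ℓ−1} not all zero, and Σ_{i<t} αᵢaᵢ ≡ 0 (mod dₜaₜ) for every t ≤ ℓ. Then there exist α'₁,…,α'_{ℓ−1} ∈ ℕ with α'ᵢ ≤ αᵢ for all i and Σ_{i<ℓ} α'ᵢaᵢ = d_ℓ·a_ℓ. -/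
/-- In the Betti divisible setup, if `α ∈ ℕⁿ` has `dₛ ∣ αₛ` for all `s`, the
entries `αᵢ` with `i < ℓ` are not all zero, and `dₜaₜ ∣ Σ_{i<t} αᵢaᵢ` for all
`t ≤ ℓ`, then there is `α' ≤ α` supported on `{i | i < ℓ}` with
`Σ_{i<ℓ} α'ᵢaᵢ = d_ℓ·a_ℓ`. -/
theorem stmt_12 (n : ℕ) (hn : 2 ≤ n) (d f a : Fin n → ℕ)
    (i₀ i₁ : Fin n) (hi₀ : (i₀ : ℕ) = 0) (hi₁ : (i₁ : ℕ) = 1)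
    (hd : ∀ i, 0 < d i) (hfpos : ∀ i, 0 < f i)
    (hcop : ∀ i j, i ≠ j → Nat.Coprime (d i) (d j))
    (hf0 : f i₀ = 1) (hf1 : f i₁ = 1)
    (hdvd : ∀ i j : Fin n, (j : ℕ) = (i : ℕ) + 1 → f i ∣ f j)
    (hdf : ∀ i, Nat.Coprime (f i) (d i))
    (ha : ∀ i, a i = f i * ∏ j ∈ Finset.univ.erase i, d j)
    (α : Fin n → ℕ) (ℓ : Fin n)
    (hmul : ∀ s, d s ∣ α s)
    (hnz : ∃ i : Fin n, i < ℓ ∧ α i ≠ 0)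
    (hcong : ∀ t : Fin n, t ≤ ℓ →
      (d t * a t) ∣ ∑ i ∈ Finset.univ.filter (fun i => i < t), α i * a i) :
    ∃ α' : Fin n → ℕ, (∀ i, α' i ≤ α i) ∧ (∀ i, ¬ i < ℓ → α' i = 0) ∧
      (∑ i ∈ Finset.univ.filter (fun i => i < ℓ), α' i * a i) = d ℓ * a ℓ := by
  -- positivity of a
  have apos : ∀ i, 0 < a i := by
    intro i
    rw [ha i]
    exact Nat.mul_pos (hfpos i) (Finset.prod_pos fun j _ => hd j)
  -- d i * a i = f i * ∏ all d
  have hda : ∀ i, d i * a i = f i * ∏ j, d j := by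
    intro i
    rw [ha i, ← Finset.mul_prod_erase Finset.univ d (Finset.mem_univ i)]
    ring
  -- f chain divisibility
  have hfchain : ∀ i j : Fin n, i ≤ j → f i ∣ f j := by
    have key : ∀ k : ℕ, ∀ i j : Fin n, (j : ℕ) = (i : ℕ) + k → f i ∣ f j := by
      intro k
      induction k with
      | zero =>
        intro i j h
        have : i = j := Fin.ext (by omega)
        rw [this]
      | succ k ih =>
        intro i j h
        have hj' : (i : ℕ) + k < n := by omega
        have := ih i ⟨(i : ℕ) + k, hj'⟩ rfl
        exact this.trans (hdvd ⟨(i : ℕ) + k, hj'⟩ j (by show (j : ℕ) = (i : ℕ) + k + 1; omega))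
    intro i j hij
    exact key ((j : ℕ) - (i : ℕ)) i j (by omega)
  have hchain : ∀ i j : Fin n, i ≤ j → d i * a i ∣ d j * a j := by
    intro i j hij
    rw [hda i, hda j]
    exact Nat.mul_dvd_mul (hfchain i j hij) dvd_rfl
  -- greedy construction
  have aux : ∀ m : ℕ, m ≤ n → ∀ R : ℕ,
      R ≤ ∑ i ∈ Finset.univ.filter (fun i : Fin n => (i : ℕ) < m), α i * a i →
      (∀ i : Fin n, (i : ℕ) < m → (d i * a i) ∣ R) →
      ∃ α' : Fin n → ℕ, (∀ i, α' i ≤ α i) ∧ (∀ i : Fin n, ¬ ((i : ℕ) < m) → α' i = 0) ∧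
        (∑ i ∈ Finset.univ.filter (fun i : Fin n => (i : ℕ) < m), α' i * a i) = R := by
    intro m
    induction m with
    | zero =>
      intro _ R hR _
      refine ⟨fun _ => 0, fun i => Nat.zero_le _, fun _ _ => rfl, ?_⟩
      simp at hR ⊢
      omega
    | succ m ih =>
      intro hm R hR hRdvd
      have hmn : m < n := by omega
      set im : Fin n := ⟨m, hmn⟩ with him
      have himv : (im : ℕ) = m := rfl
      have hnotmem : im ∉ Finset.univ.filter (fun i : Fin n => (i : ℕ) < m) := by
        simp [himv]
      have hins : Finset.univ.filter (fun i : Fin n => (i : ℕ) < m + 1)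
          = insert im (Finset.univ.filter (fun i : Fin n => (i : ℕ) < m)) := by
        ext j
        simp only [Finset.mem_filter, Finset.mem_insert, Finset.mem_univ, true_and,
          Fin.ext_iff, himv]
        omega
      rw [hins, Finset.sum_insert hnotmem] at hR
      have hdvdR : d im * a im ∣ R := hRdvd im (by omega)
      have haR : a im ∣ R := (dvd_mul_left (a im) (d im)).trans hdvdR
      rcases le_or_gt (R / a im) (α im) with h | h
      · -- can finish at index im alone
        refine ⟨Function.update (fun _ => 0) im (R / a im), ?_, ?_, ?_⟩
        · intro i
          rcases eq_or_ne i im with rfl | hne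
          · rw [Function.update_self]; exact h
          · rw [Function.update_of_ne hne]; exact Nat.zero_le _
        · intro i hi
          have hne : i ≠ im := by
            intro hh; rw [hh, himv] at hi; omega
          rw [Function.update_of_ne hne]
        · rw [hins, Finset.sum_insert hnotmem, Function.update_self]
          have hz : ∀ j ∈ Finset.univ.filter (fun i : Fin n => (i : ℕ) < m),
              Function.update (fun _ : Fin n => 0) im (R / a im) j * a j = 0 := by
            intro j hj
            have hne : j ≠ im := by rintro rfl; exact hnotmem hj
            rw [Function.update_of_ne hne]
            simp
          rw [Finset.sum_congr rfl hz]
          simp [Nat.div_mul_cancel haR]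
      · -- use all of α im and recurse
        have hlt : α im * a im < R := by
          have : (α im + 1) * a im ≤ (R / a im) * a im := Nat.mul_le_mul_right _ (by omega)
          have h2 : (R / a im) * a im ≤ R := Nat.div_mul_le_self _ _
          have h3 := apos im
          nlinarith
        set R' : ℕ := R - α im * a im with hR'def
        have hR'le : R' ≤ ∑ i ∈ Finset.univ.filter (fun i : Fin n => (i : ℕ) < m),
            α i * a i := by omega
        have hR'dvd : ∀ i : Fin n, (i : ℕ) < m → (d i * a i) ∣ R' := by
          intro i hi
          have hile : i ≤ im := by rw [Fin.le_def]; omega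
          have h1 : d i * a i ∣ α im * a im := by
            obtain ⟨c, hc⟩ := hmul im
            have hceq : α im * a im = c * (d im * a im) := by rw [hc]; ring
            rw [hceq]
            exact Dvd.dvd.mul_left (hchain i im hile) c
          exact Nat.dvd_sub (hRdvd i (by omega)) h1
        obtain ⟨β, hβle, hβ0, hβsum⟩ := ih (by omega) R' hR'le hR'dvd
        refine ⟨Function.update β im (α im), ?_, ?_, ?_⟩
        · intro i
          rcases eq_or_ne i im with rfl | hne
          · rw [Function.update_self]
          · rw [Function.update_of_ne hne]; exact hβle i
        · intro i hi
          have hne : i ≠ im := by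
            intro hh; rw [hh, himv] at hi; omega
          rw [Function.update_of_ne hne]
          exact hβ0 i (by omega)
        · rw [hins, Finset.sum_insert hnotmem, Function.update_self]
          have heq : ∑ i ∈ Finset.univ.filter (fun i : Fin n => (i : ℕ) < m),
              Function.update β im (α im) i * a i
              = ∑ i ∈ Finset.univ.filter (fun i : Fin n => (i : ℕ) < m), β i * a i := by
            apply Finset.sum_congr rfl
            intro j hj
            have hne : j ≠ im := by rintro rfl; exact hnotmem hj
            rw [Function.update_of_ne hne]
          rw [heq, hβsum]
          omega
  -- apply aux with m = ℓ, R = d ℓ * a ℓ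
  have hfilter : Finset.univ.filter (fun i : Fin n => i < ℓ)
      = Finset.univ.filter (fun i : Fin n => (i : ℕ) < (ℓ : ℕ)) := by
    apply Finset.filter_congr
    intro x _
    exact Fin.lt_def
  have hSdvd := hcong ℓ le_rfl
  have hSpos : 0 < ∑ i ∈ Finset.univ.filter (fun i : Fin n => i < ℓ), α i * a i := by
    obtain ⟨i, hi, hai⟩ := hnz
    apply Finset.sum_pos' (fun j _ => Nat.zero_le _)
    exact ⟨i, Finset.mem_filter.mpr ⟨Finset.mem_univ i, hi⟩,
      Nat.mul_pos (Nat.pos_of_ne_zero hai) (apos i)⟩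
  have hle : d ℓ * a ℓ ≤ ∑ i ∈ Finset.univ.filter (fun i : Fin n => i < ℓ), α i * a i :=
    Nat.le_of_dvd hSpos hSdvd
  rw [hfilter] at hle
  obtain ⟨α', h1, h2, h3⟩ := aux (ℓ : ℕ) ℓ.isLt.le (d ℓ * a ℓ) hle
    (fun i hi => hchain i ℓ (by rw [Fin.le_def]; omega))
  refine ⟨α', h1, ?_, ?_⟩
  · intro i hi
    exact h2 i (by rw [Fin.lt_def] at hi; omega)
  · rw [hfilter]
    exact h3
end
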